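/- arXiv:1308.4346 — 6 statements merged into one kernel-verified Lean document; each statement's English description precedes it below -/
import Mathlib

section
/- In the tree setting, the operator T satisfies ‖Tf‖_{L^∞(Ω)} ≤ ‖f‖_{L^∞(Ω)} for every f ∈ L^∞(Ω), and T is of weak type (1,1) with constant N: for every f ∈ L¹(Ω) and every λ > 0, the Lebesgue measure of {x ∈ Ω : Tf(x) > λ} is at most (N/λ)‖f‖_{L¹(Ω)}. -/
open MeasureTheory Filter Topology Metric Set

noncomputable section

abbrev Euc (n : ℕ) := EuclideanSpace ℝ (Fin n)

/-- `s ⪯ t`: `s` lies on the path from `t` to the root, i.e. `s` is obtained from `t`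
by iterating the parent map. -/
def TreeLE {Γ : Type*} (par : Γ → Γ) (s t : Γ) : Prop := ∃ k : ℕ, par^[k] t = s

/-- `W_t = ⋃_{s ⪰ t} Ω_s` -/
def Wset {n : ℕ} {Γ : Type*} (par : Γ → Γ) (Ωf : Γ → Set (Euc n)) (t : Γ) : Set (Euc n) :=
  ⋃ s ∈ {s | TreeLE par t s}, Ωf s

/-- The operator `Tf(x) = Σ_{a ≠ t ∈ Γ} (χ_t(x)/|W_t|) ∫_{W_t} |f|`. -/
def Tree_T {n : ℕ} {Γ : Type*} (a : Γ) (par : Γ → Γ) (Ωf : Γ → Set (Euc n))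
    (Bset : Γ → Set (Euc n)) (f : Euc n → ℝ) (x : Euc n) : ℝ :=
  ∑' t : {t : Γ // t ≠ a},
    Set.indicator (Bset t.1) (fun _ => (1:ℝ)) x / (volume (Wset par Ωf t.1)).toReal *
      ∫ y in Wset par Ωf t.1, |f y|

/-!
Off the pairwise disjoint sets `B_t` the operator vanishes, and on `B_t` it is the average of
`|f|` over `W_t`; this gives the `L^∞` bound at once. For the weak bound, the level set
`{Tf > λ}` lies in the union of the `W_t` over the set `S` of indices whose average exceeds `λ`.
Replacing `S` by its elements with no proper ancestor in `S` gives sets `W_s` indexed by disjoint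
subtrees, so `Σ_s χ_{W_s} ≤ Σ_u χ_{Ω_u} ≤ N`; summing `|W_s| ≤ λ⁻¹ ∫_{W_s} |f|` over them yields
`(N/λ) ‖f‖₁`. Since the parent map is total, the root may lie on a cycle of `par`; if `S` meets
that cycle, a single point of it lies below every vertex and replaces `S` instead.
-/

open scoped ENNReal

namespace TreeLE

variable {Γ : Type*} {par : Γ → Γ}

lemma refl (t : Γ) : TreeLE par t t := ⟨0, rfl⟩

lemma trans {s t u : Γ} (hst : TreeLE par s t) (htu : TreeLE par t u) : TreeLE par s u := by
  obtain ⟨k, rfl⟩ := hst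
  obtain ⟨j, rfl⟩ := htu
  exact ⟨k + j, Function.iterate_add_apply par k j u⟩

lemma total {s s' u : Γ} (hs : TreeLE par s u) (hs' : TreeLE par s' u) :
    TreeLE par s s' ∨ TreeLE par s' s := by
  obtain ⟨k, rfl⟩ := hs
  obtain ⟨j, rfl⟩ := hs'
  rcases le_total k j with hkj | hjk
  · exact .inr ⟨j - k, by rw [← Function.iterate_add_apply, Nat.sub_add_cancel hkj]⟩
  · exact .inl ⟨k - j, by rw [← Function.iterate_add_apply, Nat.sub_add_cancel hjk]⟩

lemma of_mem_periodicPts {a c : Γ} (hreach : ∀ t, ∃ k, par^[k] t = a)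
    (hc : c ∈ Function.periodicPts par) (t : Γ) : TreeLE par c t := by
  obtain ⟨j, hj, hjc⟩ := hc
  obtain ⟨i, hi⟩ := hreach c
  have hca : TreeLE par c a := by
    refine ⟨j * i - i, ?_⟩
    rw [← hi, ← Function.iterate_add_apply, Nat.sub_add_cancel (Nat.le_mul_of_pos_left i hj)]
    exact hjc.mul_const i
  exact hca.trans (hreach t)

end TreeLE

section TreeSelection

variable {Γ : Type*} {par : Γ → Γ} {a : Γ}

lemma root_mem_periodicPts (hreach : ∀ t, ∃ k, par^[k] t = a) :
    a ∈ Function.periodicPts par := by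
  obtain ⟨j, hj⟩ := hreach (par a)
  exact ⟨j + 1, j.succ_pos, hj⟩

lemma exists_last_iterate_mem {S : Set Γ} (hreach : ∀ t, ∃ k, par^[k] t = a)
    (hS : ∀ c ∈ S, c ∉ Function.periodicPts par) {t : Γ} (ht : t ∈ S) :
    ∃ k, par^[k] t ∈ S ∧ ∀ j, 0 < j → par^[j] (par^[k] t) ∉ S := by
  classical
  obtain ⟨K, hK⟩ := hreach t
  have hbound : ∀ k, par^[k] t ∈ S → k < K := by
    intro k hk
    by_contra! hKk
    obtain ⟨p, hp, hpa⟩ := root_mem_periodicPts hreach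
    refine hS _ hk ⟨p, hp, ?_⟩
    rw [← Nat.sub_add_cancel hKk, Function.iterate_add_apply, hK]
    exact hpa.apply_iterate _
  let P k := par^[k] t ∈ S
  refine ⟨Nat.findGreatest P K, Nat.findGreatest_spec (P := P) (Nat.zero_le K) ht,
    fun j hj hjk => ?_⟩
  rw [← Function.iterate_add_apply] at hjk
  exact Nat.findGreatest_is_greatest (P := P) (by omega) (hbound _ hjk).le hjk

lemma exists_subset_pairwiseDisjoint_subtrees (hreach : ∀ t, ∃ k, par^[k] t = a) (S : Set Γ) :
    ∃ S' ⊆ S, (∀ t ∈ S, ∃ s ∈ S', TreeLE par s t) ∧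
      S'.PairwiseDisjoint fun s => {u | TreeLE par s u} := by
  by_cases hcyc : ∃ c ∈ S, c ∈ Function.periodicPts par
  · obtain ⟨c, hcS, hc⟩ := hcyc
    exact ⟨{c}, singleton_subset_iff.2 hcS,
      fun t _ => ⟨c, rfl, .of_mem_periodicPts hreach hc t⟩, pairwiseDisjoint_singleton _ _⟩
  push Not at hcyc
  set S' := {s ∈ S | ∀ j, 0 < j → par^[j] s ∉ S}
  have heq : ∀ s ∈ S', ∀ s' ∈ S', TreeLE par s s' → s = s' := by
    rintro s ⟨hs, -⟩ s' ⟨-, hs'⟩ ⟨k, rfl⟩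
    rcases k.eq_zero_or_pos with rfl | hk
    · rfl
    · exact absurd hs (hs' k hk)
  refine ⟨S', sep_subset _ _, fun t ht => ?_, fun s hs s' hs' hne => ?_⟩
  · obtain ⟨k, hkS, hk⟩ := exists_last_iterate_mem hreach hcyc ht
    exact ⟨_, ⟨hkS, hk⟩, k, rfl⟩
  · refine Set.disjoint_left.2 fun u hsu hs'u => hne ?_
    rcases TreeLE.total hsu hs'u with h | h
    · exact heq s hs s' hs' h
    · exact (heq s' hs' s hs h).symm

end TreeSelection

section Averages

variable {α : Type*} [MeasurableSpace α] {μ : Measure α} {s : Set α} {f : α → ℝ}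

lemma setAverage_abs_le {M : ℝ} (hM : 0 ≤ M) (hf : ∀ᵐ x ∂μ.restrict s, |f x| ≤ M) :
    ⨍ x in s, |f x| ∂μ ≤ M := by
  rw [setAverage_eq, smul_eq_mul]
  rcases eq_or_ne (μ s) ∞ with hs | hs
  · simp [measureReal_def, hs, hM]
  calc (μ.real s)⁻¹ * ∫ x in s, |f x| ∂μ ≤ (μ.real s)⁻¹ * ∫ _ in s, M ∂μ := by
        refine mul_le_mul_of_nonneg_left ?_ (by positivity)
        exact integral_mono_of_nonneg (.of_forall fun x => abs_nonneg _) (integrableOn_const hs) hf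
    _ ≤ M := by
        rw [setIntegral_const, smul_eq_mul]
        rcases eq_or_ne (μ.real s) 0 with h0 | h0
        · simp [h0, hM]
        · rw [inv_mul_cancel_left₀ h0]

lemma measure_le_of_lt_setAverage {lam : ℝ} (hlam : 0 < lam) (hf : IntegrableOn f s μ)
    (h : lam < ⨍ x in s, |f x| ∂μ) : μ s ≤ ENNReal.ofReal lam⁻¹ * ∫⁻ x in s, ‖f x‖ₑ ∂μ := by
  rw [setAverage_eq, smul_eq_mul] at h
  have hpos : 0 < μ.real s := by
    by_contra! h0
    rw [le_antisymm h0 measureReal_nonneg, inv_zero, zero_mul] at h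
    exact hlam.not_gt h
  have hbound : μ.real s ≤ lam⁻¹ * ∫ x in s, ‖f x‖ ∂μ := by
    rw [lt_inv_mul_iff₀ hpos] at h
    rw [le_inv_mul_iff₀ hlam]
    simpa only [Real.norm_eq_abs, mul_comm] using h.le
  calc μ s = ENNReal.ofReal (μ.real s) :=
        (ENNReal.ofReal_toReal (ENNReal.toReal_pos_iff.1 hpos).2.ne).symm
    _ ≤ ENNReal.ofReal (lam⁻¹ * ∫ x in s, ‖f x‖ ∂μ) := ENNReal.ofReal_le_ofReal hbound
    _ = ENNReal.ofReal lam⁻¹ * ∫⁻ x in s, ‖f x‖ₑ ∂μ := by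
        rw [ENNReal.ofReal_mul (inv_nonneg.2 hlam.le), ofReal_integral_norm_eq_lintegral_enorm hf]

end Averages

lemma tsum_indicator_biUnion_le {ι κ α : Type*} {I : Set ι} {C : ι → Set κ}
    (hC : I.PairwiseDisjoint C) (A : κ → Set α) (x : α) :
    ∑' i : I, (⋃ k ∈ C i, A k).indicator (fun _ => (1 : ℝ≥0∞)) x ≤
      ∑' k, (A k).indicator (fun _ => 1) x := by
  have hinj : Function.Injective fun p : Σ i : I, C i => (p.2 : κ) := by
    rintro ⟨i, k, hk⟩ ⟨j, k', hk'⟩ (rfl : k = k')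
    obtain rfl : i = j := Subtype.ext <| hC.elim i.2 j.2 (Set.not_disjoint_iff.2 ⟨k, hk, hk'⟩)
    rfl
  calc ∑' i : I, (⋃ k ∈ C i, A k).indicator (fun _ => (1 : ℝ≥0∞)) x
      ≤ ∑' i : I, ∑' k : C i, (A k).indicator (fun _ => 1) x := by
        refine ENNReal.tsum_le_tsum fun i => ?_
        by_cases hx : x ∈ ⋃ k ∈ C i.1, A k
        · obtain ⟨k, hk, hxk⟩ := mem_iUnion₂.1 hx
          simpa [hx, hxk] using
            ENNReal.le_tsum (f := fun k : C i => (A k).indicator (fun _ => (1 : ℝ≥0∞)) x) ⟨k, hk⟩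
        · simp [hx]
    _ = ∑' p : Σ i : I, C i, (A p.2).indicator (fun _ => 1) x :=
        (ENNReal.tsum_sigma' fun p : Σ i : I, C i => (A p.2).indicator (fun _ => 1) x).symm
    _ ≤ ∑' k, (A k).indicator (fun _ => 1) x := ENNReal.tsum_comp_le_tsum_of_injective hinj _

lemma tsum_setLIntegral_le {α ι : Type*} [MeasurableSpace α] [Countable ι] {μ : Measure α}
    {E : ι → Set α} (hE : ∀ i, MeasurableSet (E i)) {C : ℝ≥0∞}
    (hC : ∀ᵐ x ∂μ, ∑' i, (E i).indicator (fun _ => 1) x ≤ C) {g : α → ℝ≥0∞}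
    (hg : AEMeasurable g μ) : ∑' i, ∫⁻ x in E i, g x ∂μ ≤ C * ∫⁻ x, g x ∂μ := by
  have hpoint : ∀ x,
      ∑' i, (E i).indicator g x = (∑' i, (E i).indicator (fun _ => 1) x) * g x := by
    intro x
    rw [← ENNReal.tsum_mul_right]
    refine tsum_congr fun i => ?_
    by_cases hx : x ∈ E i <;> simp [hx]
  calc ∑' i, ∫⁻ x in E i, g x ∂μ = ∑' i, ∫⁻ x, (E i).indicator g x ∂μ := by
        simp only [lintegral_indicator (hE _)]
    _ = ∫⁻ x, ∑' i, (E i).indicator g x ∂μ := (lintegral_tsum fun i => hg.indicator (hE i)).symm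
    _ ≤ ∫⁻ x, C * g x ∂μ := by
        refine lintegral_mono_ae ?_
        filter_upwards [hC] with x hx
        rw [hpoint]
        gcongr
    _ = C * ∫⁻ x, g x ∂μ := lintegral_const_mul'' C hg

lemma tsum_indicator_le_ofReal {κ α : Type*} {A : κ → Set α} {x : α} {N : ℝ}
    (hs : Summable fun k => (A k).indicator (fun _ => (1 : ℝ)) x)
    (hN : ∑' k, (A k).indicator (fun _ => (1 : ℝ)) x ≤ N) :
    ∑' k, (A k).indicator (fun _ => (1 : ℝ≥0∞)) x ≤ ENNReal.ofReal N := by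
  calc ∑' k, (A k).indicator (fun _ => (1 : ℝ≥0∞)) x
      = ∑' k, ENNReal.ofReal ((A k).indicator (fun _ => 1) x) := by
        refine tsum_congr fun k => ?_
        by_cases hx : x ∈ A k <;> simp [hx]
    _ = ENNReal.ofReal (∑' k, (A k).indicator (fun _ => 1) x) :=
        (ENNReal.ofReal_tsum_of_nonneg
          (fun k => indicator_nonneg (fun _ _ => zero_le_one) x) hs).symm
    _ ≤ ENNReal.ofReal N := ENNReal.ofReal_le_ofReal hN

section Tree

variable {n : ℕ} {Γ : Type*} {a : Γ} {par : Γ → Γ} {Ωf Bset : Γ → Set (Euc n)}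

lemma subset_Wset (t : Γ) : Ωf t ⊆ Wset par Ωf t :=
  subset_biUnion_of_mem (TreeLE.refl t)

lemma Wset_mono {s t : Γ} (h : TreeLE par s t) : Wset par Ωf t ⊆ Wset par Ωf s :=
  iUnion₂_subset fun _ hu => subset_biUnion_of_mem (h.trans hu)

lemma Wset_subset {Ω : Set (Euc n)} (h : ∀ t, Ωf t ⊆ Ω) (t : Γ) : Wset par Ωf t ⊆ Ω :=
  iUnion₂_subset fun s _ => h s

lemma Tree_T_nonneg (f : Euc n → ℝ) (x : Euc n) : 0 ≤ Tree_T a par Ωf Bset f x :=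
  tsum_nonneg fun _ => mul_nonneg (div_nonneg (indicator_nonneg (fun _ _ => zero_le_one) x)
    ENNReal.toReal_nonneg) (integral_nonneg fun _ => abs_nonneg _)

lemma Tree_T_eq_zero_or_setAverage
    (hBdisj : ∀ s t : Γ, s ≠ a → t ≠ a → s ≠ t → Disjoint (Bset s) (Bset t))
    (f : Euc n → ℝ) (x : Euc n) :
    Tree_T a par Ωf Bset f x = 0 ∨ ∃ t, t ≠ a ∧ x ∈ Bset t ∧
      Tree_T a par Ωf Bset f x = ⨍ y in Wset par Ωf t, |f y| := by
  by_cases hx : ∃ t, t ≠ a ∧ x ∈ Bset t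
  · obtain ⟨t, hta, hxt⟩ := hx
    refine .inr ⟨t, hta, hxt, ?_⟩
    rw [Tree_T, tsum_eq_single ⟨t, hta⟩, setAverage_eq, smul_eq_mul, measureReal_def,
      indicator_of_mem hxt, one_div]
    rintro ⟨s, hsa⟩ hst
    have hxs : x ∉ Bset s :=
      Set.disjoint_right.1 (hBdisj s t hsa hta fun h => hst (Subtype.ext h)) hxt
    simp [hxs]
  · push Not at hx
    refine .inl ((tsum_congr fun s => ?_).trans tsum_zero)
    simp [indicator_of_notMem (hx s.1 s.2)]

lemma eLpNorm_top_Tree_T_le {Ω : Set (Euc n)} (hΩsub : ∀ t, Ωf t ⊆ Ω)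
    (hBdisj : ∀ s t : Γ, s ≠ a → t ≠ a → s ≠ t → Disjoint (Bset s) (Bset t))
    {f : Euc n → ℝ} (hf : MemLp f ⊤ (volume.restrict Ω)) :
    eLpNorm (Tree_T a par Ωf Bset f) ⊤ (volume.restrict Ω) ≤ eLpNorm f ⊤ (volume.restrict Ω) := by
  set M := eLpNorm f ⊤ (volume.restrict Ω)
  have hfM : ∀ᵐ y ∂volume.restrict Ω, |f y| ≤ M.toReal := by
    filter_upwards [ae_le_eLpNormEssSup (f := f)] with y hy
    simpa [M] using ENNReal.toReal_mono hf.2.ne hy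
  have hTM : ∀ x, ‖Tree_T a par Ωf Bset f x‖ ≤ M.toReal := by
    intro x
    rw [Real.norm_of_nonneg (Tree_T_nonneg f x)]
    rcases Tree_T_eq_zero_or_setAverage hBdisj f x with h0 | ⟨t, -, -, ht⟩
    · exact h0 ▸ ENNReal.toReal_nonneg
    · exact ht ▸ setAverage_abs_le ENNReal.toReal_nonneg
        (ae_restrict_of_ae_restrict_of_subset (Wset_subset hΩsub t) hfM)
  calc eLpNorm (Tree_T a par Ωf Bset f) ⊤ (volume.restrict Ω) ≤ ENNReal.ofReal M.toReal :=
        eLpNormEssSup_le_of_ae_bound (.of_forall hTM)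
    _ = M := ENNReal.ofReal_toReal hf.2.ne

lemma ae_tsum_indicator_Wset_le {Ω : Set (Euc n)} {N : ℝ}
    (hcover : ∀ᵐ x ∂(volume.restrict Ω),
      1 ≤ ∑' t : Γ, Set.indicator (Ωf t) (fun _ => (1:ℝ)) x ∧
      ∑' t : Γ, Set.indicator (Ωf t) (fun _ => (1:ℝ)) x ≤ N)
    {S : Set Γ} (hS : S.PairwiseDisjoint fun s => {u | TreeLE par s u}) :
    ∀ᵐ x ∂volume.restrict Ω,
      ∑' s : S, (Wset par Ωf s).indicator (fun _ => 1) x ≤ ENNReal.ofReal N := by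
  filter_upwards [hcover] with x ⟨hone, hN⟩
  have hsum : Summable fun t => (Ωf t).indicator (fun _ => (1 : ℝ)) x := by
    by_contra h
    rw [tsum_eq_zero_of_not_summable h] at hone
    exact zero_lt_one.not_ge hone
  exact (tsum_indicator_biUnion_le hS Ωf x).trans (tsum_indicator_le_ofReal hsum hN)

lemma volume_lt_Tree_T_le [Countable Γ] {Ω : Set (Euc n)} {N : ℝ}
    (hreach : ∀ t : Γ, ∃ k : ℕ, par^[k] t = a)
    (hΩopen : ∀ t, IsOpen (Ωf t)) (hΩsub : ∀ t, Ωf t ⊆ Ω)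
    (hcover : ∀ᵐ x ∂(volume.restrict Ω),
      1 ≤ ∑' t : Γ, Set.indicator (Ωf t) (fun _ => (1:ℝ)) x ∧
      ∑' t : Γ, Set.indicator (Ωf t) (fun _ => (1:ℝ)) x ≤ N)
    (hBsub : ∀ t, t ≠ a → Bset t ⊆ Ωf t ∩ Ωf (par t))
    (hBdisj : ∀ s t : Γ, s ≠ a → t ≠ a → s ≠ t → Disjoint (Bset s) (Bset t))
    {f : Euc n → ℝ} (hf : IntegrableOn f Ω) {lam : ℝ} (hlam : 0 < lam) :
    volume {x ∈ Ω | lam < Tree_T a par Ωf Bset f x} ≤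
      ENNReal.ofReal ((N / lam) * ∫ x in Ω, |f x|) := by
  obtain ⟨S, hS, hS_cover, hS_disj⟩ := exists_subset_pairwiseDisjoint_subtrees hreach
    {t | t ≠ a ∧ lam < ⨍ y in Wset par Ωf t, |f y|}
  have hlevel : {x ∈ Ω | lam < Tree_T a par Ωf Bset f x} ⊆ ⋃ s ∈ S, Wset par Ωf s := by
    rintro x ⟨-, hx⟩
    rcases Tree_T_eq_zero_or_setAverage hBdisj f x with h0 | ⟨t, hta, hxt, ht⟩
    · exact absurd (h0 ▸ hx) hlam.not_gt
    · obtain ⟨s, hs, hst⟩ := hS_cover t ⟨hta, ht ▸ hx⟩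
      exact mem_biUnion hs (Wset_mono hst (subset_Wset t (hBsub t hta hxt).1))
  have hW : ∀ s : S,
      (volume.restrict Ω).restrict (Wset par Ωf s) = volume.restrict (Wset par Ωf s) :=
    fun s => Measure.restrict_restrict_of_subset (Wset_subset hΩsub s)
  calc volume {x ∈ Ω | lam < Tree_T a par Ωf Bset f x}
      ≤ ∑' s : S, volume (Wset par Ωf s) :=
        (measure_mono hlevel).trans (measure_biUnion_le _ S.to_countable _)
    _ ≤ ∑' s : S, ENNReal.ofReal lam⁻¹ * ∫⁻ y in Wset par Ωf s, ‖f y‖ₑ :=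
        ENNReal.tsum_le_tsum fun s => measure_le_of_lt_setAverage hlam
          (hf.mono_set (Wset_subset hΩsub s)) (hS s.2).2
    _ = ENNReal.ofReal lam⁻¹ * ∑' s : S, ∫⁻ y in Wset par Ωf s, ‖f y‖ₑ ∂volume.restrict Ω := by
        simp only [hW, ENNReal.tsum_mul_left]
    _ ≤ ENNReal.ofReal lam⁻¹ * (ENNReal.ofReal N * ∫⁻ y in Ω, ‖f y‖ₑ) := by
        gcongr
        exact tsum_setLIntegral_le
          (fun s => (isOpen_biUnion fun t _ => hΩopen t).measurableSet) (ae_tsum_indicator_Wset_le hcover hS_disj)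
          hf.aemeasurable.enorm
    _ = ENNReal.ofReal ((N / lam) * ∫ x in Ω, |f x|) := by
        rw [← ofReal_integral_norm_eq_lintegral_enorm hf, ← ENNReal.ofReal_mul' (by positivity),
          ← ENNReal.ofReal_mul (by positivity)]
        simp only [Real.norm_eq_abs, div_eq_inv_mul, mul_assoc]

end Tree

theorem T_Linfty_and_weak11_general
    (n : ℕ) (Γ : Type*) [Countable Γ]
    (Ω : Set (Euc n))
    (a : Γ) (par : Γ → Γ)
    (hreach : ∀ t : Γ, ∃ k : ℕ, par^[k] t = a)
    (Ωf : Γ → Set (Euc n)) (hΩopen : ∀ t, IsOpen (Ωf t)) (hΩsub : ∀ t, Ωf t ⊆ Ω)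
    (N : ℝ)
    -- (a): χ_Ω ≤ Σ_t χ_{Ω_t} ≤ N χ_Ω a.e. on Ω
    (hcover : ∀ᵐ x ∂(volume.restrict Ω),
      1 ≤ ∑' t : Γ, Set.indicator (Ωf t) (fun _ => (1:ℝ)) x ∧
      ∑' t : Γ, Set.indicator (Ωf t) (fun _ => (1:ℝ)) x ≤ N)
    -- (b): the sets B_t
    (Bset : Γ → Set (Euc n))
    (hBsub : ∀ t, t ≠ a → Bset t ⊆ Ωf t ∩ Ωf (par t))
    (hBdisj : ∀ s t : Γ, s ≠ a → t ≠ a → s ≠ t → Disjoint (Bset s) (Bset t)) :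
    -- strong (∞,∞) continuity with norm 1
    (∀ f : Euc n → ℝ, MemLp f ⊤ (volume.restrict Ω) →
      eLpNorm (Tree_T a par Ωf Bset f) ⊤ (volume.restrict Ω) ≤
        eLpNorm f ⊤ (volume.restrict Ω)) ∧
    -- weak (1,1) continuity with constant N
    (∀ f : Euc n → ℝ, IntegrableOn f Ω → ∀ lam : ℝ, 0 < lam →
      volume {x ∈ Ω | lam < Tree_T a par Ωf Bset f x} ≤
        ENNReal.ofReal ((N / lam) * ∫ x in Ω, |f x|)) :=
  ⟨fun _ hf => eLpNorm_top_Tree_T_le hΩsub hBdisj hf,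
    fun _ hf _ hlam => volume_lt_Tree_T_le hreach hΩopen hΩsub hcover hBsub hBdisj hf hlam⟩

theorem T_Linfty_and_weak11
    (n : ℕ) (Γ : Type*) [Countable Γ]
    (Ω : Set (Euc n)) (hopen : IsOpen Ω) (hconn : IsConnected Ω)
    (hbdd : Bornology.IsBounded Ω)
    (a : Γ) (par : Γ → Γ)
    (hreach : ∀ t : Γ, ∃ k : ℕ, par^[k] t = a)
    (Ωf : Γ → Set (Euc n)) (hΩopen : ∀ t, IsOpen (Ωf t)) (hΩsub : ∀ t, Ωf t ⊆ Ω)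
    (N : ℝ)
    -- (a): χ_Ω ≤ Σ_t χ_{Ω_t} ≤ N χ_Ω a.e. on Ω
    (hcover : ∀ᵐ x ∂(volume.restrict Ω),
      1 ≤ ∑' t : Γ, Set.indicator (Ωf t) (fun _ => (1:ℝ)) x ∧
      ∑' t : Γ, Set.indicator (Ωf t) (fun _ => (1:ℝ)) x ≤ N)
    -- (b): the sets B_t
    (Bset : Γ → Set (Euc n))
    (hBmeas : ∀ t, t ≠ a → MeasurableSet (Bset t))
    (hBsub : ∀ t, t ≠ a → Bset t ⊆ Ωf t ∩ Ωf (par t))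
    (hBpos : ∀ t, t ≠ a → 0 < volume (Bset t))
    (hBdisj : ∀ s t : Γ, s ≠ a → t ≠ a → s ≠ t → Disjoint (Bset s) (Bset t)) :
    -- strong (∞,∞) continuity with norm 1
    (∀ f : Euc n → ℝ, MemLp f ⊤ (volume.restrict Ω) →
      eLpNorm (Tree_T a par Ωf Bset f) ⊤ (volume.restrict Ω) ≤
        eLpNorm f ⊤ (volume.restrict Ω)) ∧
    -- weak (1,1) continuity with constant N
    (∀ f : Euc n → ℝ, IntegrableOn f Ω → ∀ lam : ℝ, 0 < lam →
      volume {x ∈ Ω | lam < Tree_T a par Ωf Bset f x} ≤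
        ENNReal.ofReal ((N / lam) * ∫ x in Ω, |f x|)) :=
  T_Linfty_and_weak11_general n Γ Ω a par hreach Ωf hΩopen hΩsub N hcover Bset hBsub hBdisj
end
end

section
/- Let φ : [0,a] → ℝ be continuous with φ(0) = 0 and φ(r) > 0 for all r ∈ (0,a]. Then the sequence defined by x₀ = a and x_{i+1} := max{x ∈ (0,x_i) : φ(x) = x_i − x} is well-defined (for each i the set {x ∈ (0,x_i) : φ(x) = x_i − x} is nonempty and attains a maximum in (0,x_i)), the sequence {x_i}_{i≥0} is strictly decreasing, and x_i → 0 as i → ∞. -/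
/-!
The point `x_{i+1}` is the largest zero of `x ↦ φ x + x - x_i` on `[0, x_i]`: the zero set is compact and,
by the intermediate value theorem, nonempty, and it avoids both endpoints because `φ 0 = 0 < x_i`
and `φ x_i > 0`. The resulting sequence decreases and is bounded below by `0`, so it converges to
some `L ∈ [0, A]`; passing to the limit in `φ (x_{i+1}) = x_i - x_{i+1}` gives `φ L = 0`, which
forces `L = 0`.
-/

open Set Filter Topology

lemma exists_isGreatest_eq_sub {φ : ℝ → ℝ} {b : ℝ} (hcont : ContinuousOn φ (Icc 0 b))
    (h0 : φ 0 = 0) (hb : 0 < b) (hφb : 0 < φ b) :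
    ∃ x, IsGreatest {x | x ∈ Ioo 0 b ∧ φ x = b - x} x := by
  have hg : ContinuousOn (fun x => φ x + x) (Icc 0 b) := hcont.add continuousOn_id
  set Z := Icc 0 b ∩ (fun x => φ x + x) ⁻¹' {b}
  have hZ : IsCompact Z := isCompact_Icc.of_isClosed_subset
    (hg.preimage_isClosed_of_isClosed isClosed_Icc isClosed_singleton) inter_subset_left
  have hZne : Z.Nonempty := by
    have hb_mem : b ∈ Icc (φ 0 + 0) (φ b + b) := ⟨by simpa [h0] using hb.le, by linarith⟩
    obtain ⟨x, hx, hxb⟩ := intermediate_value_Icc hb.le hg hb_mem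
    exact ⟨x, hx, hxb⟩
  obtain ⟨x, ⟨⟨hx0, hxb⟩, hφx⟩, hx_max⟩ := hZ.exists_isGreatest hZne
  simp only [mem_preimage, mem_singleton_iff] at hφx
  have hx0' : x ≠ 0 := by rintro rfl; linarith
  have hxb' : x ≠ b := by rintro rfl; linarith
  refine ⟨x, ⟨⟨hx0.lt_of_ne' hx0', hxb.lt_of_ne hxb'⟩, by linarith⟩, ?_⟩
  rintro y ⟨hy, hφy⟩
  exact hx_max ⟨Ioo_subset_Icc_self hy, by simp [hφy]⟩

lemma exists_forall_isGreatest_eq_sub {φ : ℝ → ℝ} {A : ℝ} (hcont : ContinuousOn φ (Icc 0 A))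
    (h0 : φ 0 = 0) (hpos : ∀ r, 0 < r → r ≤ A → 0 < φ r) :
    ∃ next : ℝ → ℝ, ∀ b ∈ Ioc 0 A, IsGreatest {x | x ∈ Ioo 0 b ∧ φ x = b - x} (next b) := by
  choose! next hnext using fun b (hb : b ∈ Ioc 0 A) =>
    exists_isGreatest_eq_sub (hcont.mono (Icc_subset_Icc_right hb.2)) h0 hb.1 (hpos b hb.1 hb.2)
  exact ⟨next, hnext⟩

lemma tendsto_zero_of_eq_sub_succ {φ : ℝ → ℝ} {A : ℝ} {X : ℕ → ℝ}
    (hcont : ContinuousOn φ (Icc 0 A)) (hpos : ∀ r, 0 < r → r ≤ A → 0 < φ r)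
    (hanti : Antitone X) (hX : ∀ n, X n ∈ Icc 0 A)
    (hstep : ∀ n, φ (X (n + 1)) = X n - X (n + 1)) :
    Tendsto X atTop (𝓝 0) := by
  obtain ⟨L, hL⟩ : ∃ L, Tendsto X atTop (𝓝 L) :=
    ⟨_, tendsto_atTop_ciInf hanti ⟨0, by rintro _ ⟨n, rfl⟩; exact (hX n).1⟩⟩
  have hL_mem : L ∈ Icc 0 A := isClosed_Icc.mem_of_tendsto hL (Eventually.of_forall hX)
  have hL_succ : Tendsto (fun n => X (n + 1)) atTop (𝓝 L) := hL.comp (tendsto_add_atTop_nat 1)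
  have hφ_lim : Tendsto (fun n => φ (X (n + 1))) atTop (𝓝 (φ L)) :=
    (hcont L hL_mem).tendsto.comp
      (tendsto_nhdsWithin_iff.2 ⟨hL_succ, Eventually.of_forall fun n => hX (n + 1)⟩)
  have hφ_zero : Tendsto (fun n => φ (X (n + 1))) atTop (𝓝 0) := by
    simpa only [hstep, sub_self] using hL.sub hL_succ
  have hφL : φ L = 0 := tendsto_nhds_unique hφ_lim hφ_zero
  obtain rfl : L = 0 := by
    by_contra hL0
    exact (hpos L (hL_mem.1.lt_of_ne' hL0) hL_mem.2).ne' hφL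
  exact hL

theorem cusp_sequence_well_defined
    (A : ℝ) (hA : 0 < A) (φ : ℝ → ℝ)
    (hcont : ContinuousOn φ (Icc 0 A))
    (h0 : φ 0 = 0) (hpos : ∀ r, 0 < r → r ≤ A → 0 < φ r) :
    ∃ X : ℕ → ℝ, X 0 = A ∧
      -- for each i the set {x ∈ (0, x_i) : φ(x) = x_i − x} is nonempty and
      -- X (i+1) is its maximum
      (∀ i : ℕ, X (i+1) ∈ Ioo 0 (X i) ∧ φ (X (i+1)) = X i - X (i+1) ∧
        ∀ y ∈ Ioo 0 (X i), φ y = X i - y → y ≤ X (i+1)) ∧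
      -- the sequence is strictly decreasing
      StrictAnti X ∧
      -- and tends to 0
      Tendsto X atTop (𝓝 (0:ℝ)) := by
  obtain ⟨next, hnext⟩ := exists_forall_isGreatest_eq_sub hcont h0 hpos
  set X : ℕ → ℝ := fun n => next^[n] A
  have hX_succ (n : ℕ) : X (n + 1) = next (X n) := Function.iterate_succ_apply' next n A
  have hX_mem (n : ℕ) : X n ∈ Ioc 0 A := by
    induction n with
    | zero => exact ⟨hA, le_rfl⟩
    | succ n ih =>
      obtain ⟨⟨hx, -⟩, -⟩ := hnext _ ih
      rw [hX_succ]
      exact ⟨hx.1, hx.2.le.trans ih.2⟩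
  have hX_greatest (i : ℕ) : IsGreatest {x | x ∈ Ioo 0 (X i) ∧ φ x = X i - x} (X (i + 1)) := by
    rw [hX_succ]; exact hnext _ (hX_mem i)
  have hX_anti : StrictAnti X := strictAnti_nat_of_succ_lt fun n => (hX_greatest n).1.1.2
  refine ⟨X, rfl, fun i => ⟨(hX_greatest i).1.1, (hX_greatest i).1.2,
    fun y hy hφy => (hX_greatest i).2 ⟨hy, hφy⟩⟩, hX_anti, ?_⟩
  exact tendsto_zero_of_eq_sub_succ hcont hpos hX_anti.antitone
    (fun n => Ioc_subset_Icc_self (hX_mem n)) fun n => (hX_greatest n).1.2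
end

section
/- Let φ : [0,a] → ℝ be continuous with φ(0) = 0, φ(r) > 0 for all r ∈ (0,a], and Lipschitz with |φ(x) − φ(x′)| ≤ K₁|x − x′| for all x, x′ ∈ [0,a]. Let {x_i}_{i≥0} be the associated sequence. Then for every i ≥ 0 and every x with x_{i+1} ≤ x ≤ x_i, one has x_{i+1} ≤ x ≤ (K₁ + 1)·x_{i+1}. -/
open Set Filter Topology

lemma le_mul_of_abs_sub_le_of_map_zero {φ : ℝ → ℝ} {s : Set ℝ} {K y : ℝ} (h0 : φ 0 = 0)
    (hlip : ∀ x ∈ s, ∀ x' ∈ s, |φ x - φ x'| ≤ K * |x - x'|) (h0s : 0 ∈ s) (hys : y ∈ s)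
    (hy : 0 ≤ y) : φ y ≤ K * y := by
  have h := hlip y hys 0 h0s
  rw [h0, sub_zero, sub_zero, abs_of_nonneg hy] at h
  exact (le_abs_self _).trans h

theorem cusp_sequence_comparison_r_general
    (A : ℝ) (φ : ℝ → ℝ)
    (h0 : φ 0 = 0)
    (K₁ : ℝ)
    (hlip : ∀ x ∈ Icc 0 A, ∀ x' ∈ Icc 0 A, |φ x - φ x'| ≤ K₁ * |x - x'|)
    -- the associated sequence
    (X : ℕ → ℝ) (hX0 : X 0 = A)
    (hX : ∀ i : ℕ, X (i+1) ∈ Ioo 0 (X i) ∧ φ (X (i+1)) = X i - X (i+1) ∧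
      ∀ y ∈ Ioo 0 (X i), φ y = X i - y → y ≤ X (i+1)) :
    ∀ i : ℕ, ∀ x : ℝ, X (i+1) ≤ x → x ≤ X i →
      X (i+1) ≤ x ∧ x ≤ (K₁ + 1) * X (i+1) := by
  intro i x hx₁ hx₂
  obtain ⟨⟨hpos, -⟩, hstep, -⟩ := hX i
  have hle : X (i+1) ≤ A :=
    hX0 ▸ antitone_nat_of_succ_le (fun n => (hX n).1.2.le) (Nat.zero_le _)
  have hφ : φ (X (i+1)) ≤ K₁ * X (i+1) :=
    le_mul_of_abs_sub_le_of_map_zero h0 hlip ⟨le_rfl, hpos.le.trans hle⟩ ⟨hpos.le, hle⟩ hpos.le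
  exact ⟨hx₁, by linarith⟩

theorem cusp_sequence_comparison_r
    (A : ℝ) (hA : 0 < A) (φ : ℝ → ℝ)
    (hcont : ContinuousOn φ (Icc 0 A))
    (h0 : φ 0 = 0) (hpos : ∀ r, 0 < r → r ≤ A → 0 < φ r)
    (K₁ : ℝ)
    (hlip : ∀ x ∈ Icc 0 A, ∀ x' ∈ Icc 0 A, |φ x - φ x'| ≤ K₁ * |x - x'|)
    -- the associated sequence
    (X : ℕ → ℝ) (hX0 : X 0 = A)
    (hX : ∀ i : ℕ, X (i+1) ∈ Ioo 0 (X i) ∧ φ (X (i+1)) = X i - X (i+1) ∧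
      ∀ y ∈ Ioo 0 (X i), φ y = X i - y → y ≤ X (i+1)) :
    ∀ i : ℕ, ∀ x : ℝ, X (i+1) ≤ x → x ≤ X i →
      X (i+1) ≤ x ∧ x ≤ (K₁ + 1) * X (i+1) :=
  cusp_sequence_comparison_r_general A φ h0 K₁ hlip X hX0 hX
end

section
/- Let φ : [0,a] → ℝ be continuous with φ(0) = 0, φ(r) > 0 for all r ∈ (0,a], Lipschitz with |φ(x) − φ(x′)| ≤ K₁|x − x′| for all x, x′ ∈ [0,a], and satisfying φ(t)/t ≤ K₂·φ(r)/r for all 0 < t < r ≤ a. Let {x_i}_{i≥0} be the associated sequence. Then for every i ≥ 0 and every x with x_{i+1} ≤ x ≤ x_i, one has (1/K₂)·φ(x_{i+1}) ≤ φ(x) ≤ (K₁ + 1)·φ(x_{i+1}). -/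
/-!
For `x_{i+1} ≤ x ≤ x_i` the upper bound is the Lipschitz estimate from `x_{i+1}`, since
`φ(x_{i+1}) = x_i - x_{i+1}` dominates `x - x_{i+1}`. The lower bound is the quotient condition
with `t = x_{i+1}, r = x`, together with `K₂ ≥ 1`: if `K₂ < 1`, iterating the quotient condition
through midpoints would force `φ(t)/t ≤ K₂ⁿ φ(r)/r → 0`.
-/

open Set Filter Topology

theorem one_le_of_forall_le_mul {g : ℝ → ℝ} {a b K : ℝ} (hab : a < b)
    (hpos : ∀ t ∈ Ioc a b, 0 < g t)
    (hK : ∀ t r, a < t → t < r → r ≤ b → g t ≤ K * g r) : 1 ≤ K := by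
  have hb : 0 < g b := hpos b ⟨hab, le_rfl⟩
  have hK₀ : 0 < K := by
    have hhalf := hK ((a + b) / 2) b (by linarith) (by linarith) le_rfl
    exact pos_of_mul_pos_left ((hpos _ ⟨by linarith, by linarith⟩).trans_le hhalf) hb.le
  by_contra! hK₁
  have hiter : ∀ n : ℕ, ∀ t ∈ Ioo a b, g t ≤ K ^ (n + 1) * g b := by
    intro n
    induction n with
    | zero => exact fun t ht => by simpa using hK t b ht.1 ht.2 le_rfl
    | succ n ih =>
      intro t ht
      calc g t ≤ K * g ((t + b) / 2) := hK _ _ ht.1 (by linarith [ht.2]) (by linarith [ht.2])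
        _ ≤ K * (K ^ (n + 1) * g b) :=
          mul_le_mul_of_nonneg_left (ih _ ⟨by linarith [ht.1], by linarith [ht.2]⟩) hK₀.le
        _ = K ^ (n + 1 + 1) * g b := by ring
  have hlim : Tendsto (fun n : ℕ => K ^ (n + 1) * g b) atTop (𝓝 0) := by
    simpa using ((tendsto_pow_atTop_nhds_zero_of_lt_one hK₀.le hK₁).comp
      (tendsto_add_atTop_nat 1)).mul_const (g b)
  have hmid : (a + b) / 2 ∈ Ioo a b := ⟨by linarith, by linarith⟩
  exact (hpos _ (Ioo_subset_Ioc_self hmid)).not_ge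
    (ge_of_tendsto' hlim fun n => hiter n _ hmid)

theorem one_div_mul_le_of_div_le_mul_div {φ : ℝ → ℝ} {b K t x : ℝ}
    (hpos : ∀ r, 0 < r → r ≤ b → 0 < φ r)
    (hquot : ∀ t r, 0 < t → t < r → r ≤ b → φ t / t ≤ K * (φ r / r))
    (ht : 0 < t) (htx : t ≤ x) (hxb : x ≤ b) : 1 / K * φ t ≤ φ x := by
  have hK : 1 ≤ K := one_le_of_forall_le_mul (g := fun r => φ r / r) (ht.trans_le (htx.trans hxb))
    (fun r hr => div_pos (hpos r hr.1 hr.2) hr.1) hquot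
  have hx : 0 < x := ht.trans_le htx
  have hφx : 0 < φ x := hpos x hx hxb
  rw [one_div_mul_eq_div, div_le_iff₀' (by linarith)]
  rcases htx.eq_or_lt with rfl | hlt
  · nlinarith
  · calc φ t = t * (φ t / t) := by field_simp
      _ ≤ x * (K * (φ x / x)) :=
        mul_le_mul htx (hquot t x ht hlt hxb) (div_pos (hpos t ht (htx.trans hxb)) ht).le hx.le
      _ = K * φ x := by field_simp

theorem le_add_one_mul_of_abs_sub_le {φ : ℝ → ℝ} {K t x s : ℝ} (hK : 0 ≤ K)
    (hlip : |φ x - φ t| ≤ K * |x - t|) (htx : t ≤ x) (hxs : x ≤ s) (hφt : φ t = s - t) :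
    φ x ≤ (K + 1) * φ t := by
  rw [abs_of_nonneg (sub_nonneg.mpr htx)] at hlip
  nlinarith [le_abs_self (φ x - φ t), mul_le_mul_of_nonneg_left (sub_le_sub_right hxs t) hK]

theorem cusp_sequence_comparison_phi_general
    (A : ℝ) (φ : ℝ → ℝ)
    (hpos : ∀ r, 0 < r → r ≤ A → 0 < φ r)
    (K₁ K₂ : ℝ)
    (hlip : ∀ x ∈ Icc 0 A, ∀ x' ∈ Icc 0 A, |φ x - φ x'| ≤ K₁ * |x - x'|)
    (hquot : ∀ t r, 0 < t → t < r → r ≤ A → φ t / t ≤ K₂ * (φ r / r))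
    -- the associated sequence
    (X : ℕ → ℝ) (hX0 : X 0 = A)
    (hX : ∀ i : ℕ, X (i+1) ∈ Ioo 0 (X i) ∧ φ (X (i+1)) = X i - X (i+1) ∧
      ∀ y ∈ Ioo 0 (X i), φ y = X i - y → y ≤ X (i+1)) :
    ∀ i : ℕ, ∀ x : ℝ, X (i+1) ≤ x → x ≤ X i →
      (1 / K₂) * φ (X (i+1)) ≤ φ x ∧ φ x ≤ (K₁ + 1) * φ (X (i+1)) := by
  intro i x hx₁ hx₂
  obtain ⟨⟨hXpos, hXlt⟩, hφX, -⟩ := hX i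
  have hXA : X i ≤ A :=
    hX0 ▸ (strictAnti_nat_of_succ_lt fun j => (hX j).1.2).antitone (Nat.zero_le i)
  have hmem {y} (h₁ : X (i+1) ≤ y) (h₂ : y ≤ X i) : y ∈ Icc 0 A :=
    ⟨hXpos.le.trans h₁, h₂.trans hXA⟩
  have hK₁ : 0 ≤ K₁ :=
    nonneg_of_mul_nonneg_left ((abs_nonneg _).trans (hlip _ (hmem hXlt.le le_rfl) _
      (hmem le_rfl hXlt.le))) (abs_pos.mpr (sub_ne_zero.mpr hXlt.ne'))
  exact ⟨one_div_mul_le_of_div_le_mul_div hpos hquot hXpos hx₁ (hx₂.trans hXA),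
    le_add_one_mul_of_abs_sub_le hK₁ (hlip x (hmem hx₁ hx₂) _ (hmem le_rfl hXlt.le)) hx₁ hx₂ hφX⟩

theorem cusp_sequence_comparison_phi
    (A : ℝ) (hA : 0 < A) (φ : ℝ → ℝ)
    (hcont : ContinuousOn φ (Icc 0 A))
    (h0 : φ 0 = 0) (hpos : ∀ r, 0 < r → r ≤ A → 0 < φ r)
    (K₁ K₂ : ℝ)
    (hlip : ∀ x ∈ Icc 0 A, ∀ x' ∈ Icc 0 A, |φ x - φ x'| ≤ K₁ * |x - x'|)
    (hquot : ∀ t r, 0 < t → t < r → r ≤ A → φ t / t ≤ K₂ * (φ r / r))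
    -- the associated sequence
    (X : ℕ → ℝ) (hX0 : X 0 = A)
    (hX : ∀ i : ℕ, X (i+1) ∈ Ioo 0 (X i) ∧ φ (X (i+1)) = X i - X (i+1) ∧
      ∀ y ∈ Ioo 0 (X i), φ y = X i - y → y ≤ X (i+1)) :
    ∀ i : ℕ, ∀ x : ℝ, X (i+1) ≤ x → x ≤ X i →
      (1 / K₂) * φ (X (i+1)) ≤ φ x ∧ φ x ≤ (K₁ + 1) * φ (X (i+1)) :=
  cusp_sequence_comparison_phi_general A φ hpos K₁ K₂ hlip hquot X hX0 hX
end

section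
/- Let n ≥ 2, K₁ ≥ 1, M > 0, and r₋ < r₊ real numbers with r₊ − r₋ ≤ M/(2K₁). Let φ : [r₋, r₊] → ℝ be Lipschitz with |φ(x) − φ(x′)| ≤ K₁|x − x′| and φ(x) ≥ M for all x ∈ [r₋, r₊]. Then the domain U := {(x,y) ∈ ℝ × ℝ^{n−1} : r₋ < x < r₊ and |y| < φ(x)} is star-shaped with respect to the open Euclidean ball B centered at ((r₋ + r₊)/2, 0) of radius (r₊ − r₋)/2: B ⊂ U and every segment with one endpoint in U and the other endpoint in B is contained in U. -/
/-!
A point `w` of the ball has `|w.2| < (r₊ - r₋)/2`, while along the segment from `z ∈ U` to `w`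
the Lipschitz bound lets `φ` drop below `φ(z.1)` by at most `s K₁ (r₊ - r₋) ≤ s M / 2`.
Since `φ(z.1) ≥ M`, the convex combination `s |w.2| + (1 - s) |z.2|` stays below `φ` at every
point of the segment.
-/

open Set

section GraphDomain

variable {E : Type*} [SeminormedAddCommGroup E]

lemma abs_lt_of_sq_add_sq_lt {u t ρ : ℝ} (h : u ^ 2 + t ^ 2 < ρ ^ 2) (hρ : 0 ≤ ρ) :
    |u| < ρ ∧ |t| < ρ :=
  ⟨abs_lt_of_sq_lt_sq (by nlinarith [sq_nonneg t]) hρ,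
    abs_lt_of_sq_lt_sq (by nlinarith [sq_nonneg u]) hρ⟩

lemma mem_Ioo_of_sq_add_norm_sq_lt {a b : ℝ} (hab : a ≤ b) {w : ℝ × E}
    (hw : (w.1 - (a + b) / 2) ^ 2 + ‖w.2‖ ^ 2 < ((b - a) / 2) ^ 2) :
    w.1 ∈ Ioo a b ∧ ‖w.2‖ < (b - a) / 2 := by
  obtain ⟨h₁, h₂⟩ := abs_lt_of_sq_add_sq_lt hw (by linarith)
  rw [abs_norm] at h₂
  obtain ⟨h₁l, h₁r⟩ := abs_lt.1 h₁
  exact ⟨⟨by linarith, by linarith⟩, h₂⟩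

variable [NormedSpace ℝ E]

lemma norm_convex_combination_lt {y y' : E} {r t s : ℝ} (hs : s ∈ Icc (0 : ℝ) 1)
    (hy : ‖y‖ < r) (hy' : ‖y'‖ < t) :
    ‖s • y + (1 - s) • y'‖ < s * r + (1 - s) * t := by
  have hgap : 0 < s * (r - ‖y‖) + (1 - s) * (t - ‖y'‖) :=
    convex_Ioi (0 : ℝ) (sub_pos.2 hy) (sub_pos.2 hy') hs.1 (sub_nonneg.2 hs.2)
      (add_sub_cancel _ _)
  have htri : ‖s • y + (1 - s) • y'‖ ≤ s * ‖y‖ + (1 - s) * ‖y'‖ := by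
    refine (norm_add_le _ _).trans_eq ?_
    rw [norm_smul, norm_smul, Real.norm_of_nonneg hs.1, Real.norm_of_nonneg (sub_nonneg.2 hs.2)]
  linarith

theorem convex_combination_mem_graphDomain {a b K M r : ℝ} {φ : ℝ → ℝ} (hK : 0 ≤ K)
    (hlip : ∀ x ∈ Icc a b, ∀ x' ∈ Icc a b, |φ x - φ x'| ≤ K * |x - x'|)
    (hφM : ∀ x ∈ Icc a b, M ≤ φ x) (hrM : r + K * (b - a) ≤ M)
    {z w : ℝ × E} (hz : a < z.1 ∧ z.1 < b ∧ ‖z.2‖ < φ z.1)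
    (hw₁ : w.1 ∈ Ioo a b) (hw₂ : ‖w.2‖ < r) {s : ℝ} (hs : s ∈ Icc (0 : ℝ) 1) :
    a < (s • w + (1 - s) • z).1 ∧ (s • w + (1 - s) • z).1 < b ∧
      ‖(s • w + (1 - s) • z).2‖ < φ (s • w + (1 - s) • z).1 := by
  obtain ⟨hz₁, hz₂, hz₃⟩ := hz
  set p := s • w + (1 - s) • z
  have hp : p.1 ∈ Ioo a b :=
    convex_Ioo a b hw₁ ⟨hz₁, hz₂⟩ hs.1 (sub_nonneg.2 hs.2) (add_sub_cancel _ _)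
  have hdist : |p.1 - z.1| ≤ s * (b - a) := by
    have hp₁ : p.1 - z.1 = s * (w.1 - z.1) := by
      simp only [p, Prod.fst_add, Prod.smul_fst, smul_eq_mul]
      ring
    rw [hp₁, abs_mul, abs_of_nonneg hs.1]
    have hw : |w.1 - z.1| ≤ b - a := abs_sub_le_iff.2 ⟨by linarith [hw₁.2], by linarith [hw₁.1]⟩
    exact mul_le_mul_of_nonneg_left hw hs.1
  have hφp : φ z.1 - K * (s * (b - a)) ≤ φ p.1 := by
    have hzI : z.1 ∈ Icc a b := ⟨hz₁.le, hz₂.le⟩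
    have := (abs_le.1 (hlip p.1 (Ioo_subset_Icc_self hp) z.1 hzI)).1
    nlinarith [mul_le_mul_of_nonneg_left hdist hK]
  have hnorm : ‖p.2‖ < s * r + (1 - s) * φ z.1 := norm_convex_combination_lt hs hw₂ hz₃
  have hcone : s * (r + K * (b - a)) ≤ s * φ z.1 :=
    mul_le_mul_of_nonneg_left (hrM.trans (hφM z.1 ⟨hz₁.le, hz₂.le⟩)) hs.1
  exact ⟨hp.1, hp.2, by nlinarith⟩

end GraphDomain

theorem graph_domain_star_shaped_general
    (m : ℕ)   -- n = m + 1 ≥ 2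
    (K₁ M rm rp : ℝ) (hK : 1 ≤ K₁) (hM : 0 < M) (hr : rm < rp)
    (hwidth : rp - rm ≤ M / (2 * K₁))
    (φ : ℝ → ℝ)
    (hlip : ∀ x ∈ Icc rm rp, ∀ x' ∈ Icc rm rp, |φ x - φ x'| ≤ K₁ * |x - x'|)
    (hφM : ∀ x ∈ Icc rm rp, M ≤ φ x) :
    -- U = {(x,y) : r₋ < x < r₊, |y| < φ(x)},
    -- B = open Euclidean ball of center ((r₋+r₊)/2, 0) and radius (r₊−r₋)/2
    ({z : ℝ × EuclideanSpace ℝ (Fin m) |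
        (z.1 - (rm + rp) / 2) ^ 2 + ‖z.2‖ ^ 2 < ((rp - rm) / 2) ^ 2} ⊆
      {z : ℝ × EuclideanSpace ℝ (Fin m) | rm < z.1 ∧ z.1 < rp ∧ ‖z.2‖ < φ z.1}) ∧
    ∀ z ∈ {z : ℝ × EuclideanSpace ℝ (Fin m) | rm < z.1 ∧ z.1 < rp ∧ ‖z.2‖ < φ z.1},
    ∀ w ∈ {z : ℝ × EuclideanSpace ℝ (Fin m) |
        (z.1 - (rm + rp) / 2) ^ 2 + ‖z.2‖ ^ 2 < ((rp - rm) / 2) ^ 2},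
    ∀ s ∈ Icc (0:ℝ) 1,
      s • w + (1 - s) • z ∈
        {z : ℝ × EuclideanSpace ℝ (Fin m) | rm < z.1 ∧ z.1 < rp ∧ ‖z.2‖ < φ z.1} := by
  have hK₀ : 0 < K₁ := zero_lt_one.trans_le hK
  have hKw : K₁ * (rp - rm) ≤ M / 2 := by
    rw [le_div_iff₀ (by positivity)] at hwidth
    linarith
  have hcone : (rp - rm) / 2 + K₁ * (rp - rm) ≤ M := by
    nlinarith [mul_le_mul_of_nonneg_right hK (sub_nonneg.2 hr.le)]
  refine ⟨fun w hw ↦ ?_, fun z hz w hw s hs ↦ ?_⟩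
  · obtain ⟨⟨hw₁, hw₂⟩, hw₃⟩ := mem_Ioo_of_sq_add_norm_sq_lt hr.le hw
    have hφw := hφM w.1 ⟨hw₁.le, hw₂.le⟩
    exact ⟨hw₁, hw₂, by nlinarith [mul_nonneg hK₀.le (sub_nonneg.2 hr.le)]⟩
  · obtain ⟨hw₁, hw₂⟩ := mem_Ioo_of_sq_add_norm_sq_lt hr.le hw
    exact convex_combination_mem_graphDomain hK₀.le hlip hφM hcone hz hw₁ hw₂ hs

theorem graph_domain_star_shaped
    (m : ℕ) (hm : 1 ≤ m)   -- n = m + 1 ≥ 2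
    (K₁ M rm rp : ℝ) (hK : 1 ≤ K₁) (hM : 0 < M) (hr : rm < rp)
    (hwidth : rp - rm ≤ M / (2 * K₁))
    (φ : ℝ → ℝ)
    (hlip : ∀ x ∈ Icc rm rp, ∀ x' ∈ Icc rm rp, |φ x - φ x'| ≤ K₁ * |x - x'|)
    (hφM : ∀ x ∈ Icc rm rp, M ≤ φ x) :
    -- U = {(x,y) : r₋ < x < r₊, |y| < φ(x)},
    -- B = open Euclidean ball of center ((r₋+r₊)/2, 0) and radius (r₊−r₋)/2
    ({z : ℝ × EuclideanSpace ℝ (Fin m) |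
        (z.1 - (rm + rp) / 2) ^ 2 + ‖z.2‖ ^ 2 < ((rp - rm) / 2) ^ 2} ⊆
      {z : ℝ × EuclideanSpace ℝ (Fin m) | rm < z.1 ∧ z.1 < rp ∧ ‖z.2‖ < φ z.1}) ∧
    ∀ z ∈ {z : ℝ × EuclideanSpace ℝ (Fin m) | rm < z.1 ∧ z.1 < rp ∧ ‖z.2‖ < φ z.1},
    ∀ w ∈ {z : ℝ × EuclideanSpace ℝ (Fin m) |
        (z.1 - (rm + rp) / 2) ^ 2 + ‖z.2‖ ^ 2 < ((rp - rm) / 2) ^ 2},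
    ∀ s ∈ Icc (0:ℝ) 1,
      s • w + (1 - s) • z ∈
        {z : ℝ × EuclideanSpace ℝ (Fin m) | rm < z.1 ∧ z.1 < rp ∧ ‖z.2‖ < φ z.1} :=
  graph_domain_star_shaped_general m K₁ M rm rp hK hM hr hwidth φ hlip hφM
end

section
/- Let Ω ⊊ ℝⁿ be a nonempty open set and W a Whitney decomposition of Ω. Let Q, Q̃ ∈ W be two cubes whose intersection Q ∩ Q̃ is an (n−1)-dimensional face of one of them, let c be the center of this face, and let l be the side length of Q. Then the open cube B centered at c with sides of length 2⁻⁹·l (parallel to the axes) satisfies B ⊂ Q* ∩ Q̃*, and B ∩ P* = ∅ for every cube P ∈ W with P ∉ {Q, Q̃}, where the expanded cubes use ε = 2⁻⁷. -/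
open MeasureTheory Filter Topology Metric Set

noncomputable section

/-- closed axis-parallel cube with center `c` and side length `l` -/
def Wcube {n : ℕ} (c : Euc n) (l : ℝ) : Set (Euc n) := {x | ∀ i, |x i - c i| ≤ l / 2}

/-- the open cube with the same center expanded by the factor `1 + 2^(-7)` -/
def WcubeStar {n : ℕ} (c : Euc n) (l : ℝ) : Set (Euc n) :=
  {x | ∀ i, |x i - c i| < (1 + (2:ℝ)^(-7 : ℤ)) * l / 2}

/-- distance between two sets -/
def sDist {n : ℕ} (A B : Set (Euc n)) : ℝ := sInf {d | ∃ a ∈ A, ∃ b ∈ B, d = dist a b}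

/-!
Let `Q` be the cube of which `F = Q ∩ Q̃` is a face, and `c_F` the centre of `F`. Near `c_F` the
two cubes fill a full neighbourhood: a point at sup-distance `< l(Q)/4` from `c_F` and off the
hyperplane of `F` lies in `int Q` or in `int Q̃`. The cube `B` sits in both expanded cubes because
`c_F ∈ Q ∩ Q̃` and touching cubes have comparable sides. If `B` met `P*` for a third cube `P`,
pulling the common point slightly towards the centre of `P` gives a point of `int P`; the Whitney
distance bounds, applied to this point and to `c_F ∈ Q`, force `l(P) ≤ 6 l(Q)`, so the point is
within `l(Q)/4` of `c_F`. Moving it off the hyperplane inside the open set `int P` produces a point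
of `int P ∩ int Q` or of `int P ∩ int Q̃`.
-/

section

variable {n : ℕ}

-- `s` is the half-side, whereas `Wcube c l` has side `l`.
def openCube (c : Euc n) (s : ℝ) : Set (Euc n) := {x | ∀ j, |x j - c j| < s}

def Wface (c : Euc n) (l σ : ℝ) (i : Fin n) : Set (Euc n) :=
  {x | x i = c i + σ * l / 2 ∧ ∀ j, |x j - c j| ≤ l / 2}

def faceCenter (c : Euc n) (l σ : ℝ) (i : Fin n) : Euc n :=
  c + (σ * l / 2) • EuclideanSpace.single i 1

lemma add_smul_single_apply (x : Euc n) (t : ℝ) (i j : Fin n) :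
    (x + t • EuclideanSpace.single i (1 : ℝ)) j = x j + if j = i then t else 0 := by
  simp [PiLp.single_apply]

lemma dist_le_sqrt_mul_of_abs_sub_le {x y : Euc n} {d : ℝ} (hd : 0 ≤ d)
    (h : ∀ j, |x j - y j| ≤ d) : dist x y ≤ √n * d := by
  have hsum : ∑ j, dist (x j) (y j) ^ 2 ≤ n * d ^ 2 := by
    calc ∑ j, dist (x j) (y j) ^ 2 ≤ ∑ _j : Fin n, d ^ 2 :=
          Finset.sum_le_sum fun j _ => pow_le_pow_left₀ dist_nonneg (h j) 2
      _ = n * d ^ 2 := by simp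
  calc dist x y = √(∑ j, dist (x j) (y j) ^ 2) := EuclideanSpace.dist_eq x y
    _ ≤ √(n * d ^ 2) := Real.sqrt_le_sqrt hsum
    _ = √n * d := by rw [Real.sqrt_mul n.cast_nonneg, Real.sqrt_sq hd]

lemma dist_le_of_mem_Wcube {c x y : Euc n} {l : ℝ} (hl : 0 ≤ l)
    (hx : x ∈ Wcube c l) (hy : y ∈ Wcube c l) : dist x y ≤ √n * l := by
  refine dist_le_sqrt_mul_of_abs_sub_le hl fun j => ?_
  calc |x j - y j| ≤ |x j - c j| + |c j - y j| := abs_sub_le ..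
    _ ≤ l := by rw [abs_sub_comm (c j)]; linarith [hx j, hy j]

lemma diam_Wcube (c : Euc n) {l : ℝ} (hl : 0 ≤ l) : diam (Wcube c l) = √n * l := by
  refine le_antisymm (diam_le_of_forall_dist_le (by positivity) fun x hx y hy =>
    dist_le_of_mem_Wcube hl hx hy) ?_
  let corner (s : ℝ) : Euc n := WithLp.toLp 2 fun j => c j + s
  have hcorner : ∀ s, |s| ≤ l / 2 → corner s ∈ Wcube c l := fun s hs j => by
    simpa [corner] using hs
  have hplus := hcorner (l / 2) (by rw [abs_of_nonneg (by linarith)])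
  have hminus := hcorner (-(l / 2)) (by rw [abs_neg, abs_of_nonneg (by linarith)])
  have hdist : dist (corner (l / 2)) (corner (-(l / 2))) = √n * l := by
    simp [corner, EuclideanSpace.dist_eq, Real.dist_eq, abs_of_nonneg hl,
      Real.sqrt_mul n.cast_nonneg, Real.sqrt_sq hl]
  rw [← hdist]
  exact dist_le_diam_of_mem (isBounded_iff.2 ⟨√n * l, fun x hx y hy =>
    dist_le_of_mem_Wcube hl hx hy⟩) hplus hminus

lemma side_le_of_diam_Wcube_le (hn : 0 < n) {c c' : Euc n} {l l' K : ℝ} (hl : 0 ≤ l)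
    (hl' : 0 ≤ l') (h : diam (Wcube c l) ≤ K * diam (Wcube c' l')) : l ≤ K * l' := by
  rw [diam_Wcube c hl, diam_Wcube c' hl', mul_left_comm] at h
  exact le_of_mul_le_mul_left h (Real.sqrt_pos.2 (Nat.cast_pos.2 hn))

lemma sDist_le_dist_add_sDist {A B F : Set (Euc n)} (hF : F.Nonempty) {x y : Euc n} {d : ℝ}
    (hx : x ∈ A) (hy : y ∈ B) (hd : ∀ w ∈ A, dist x w ≤ d) :
    sDist B F ≤ dist y x + d + sDist A F := by
  have hbdd : BddBelow {e | ∃ b ∈ B, ∃ z ∈ F, e = dist b z} :=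
    ⟨0, by rintro e ⟨b, -, z, -, rfl⟩; exact dist_nonneg⟩
  refine le_of_forall_pos_le_add fun η hη => ?_
  obtain ⟨z, hz⟩ := hF
  obtain ⟨e, ⟨w, hw, z', hz', rfl⟩, hlt⟩ :=
    Real.lt_sInf_add_pos (s := {e | ∃ a ∈ A, ∃ b ∈ F, e = dist a b})
      ⟨dist x z, x, hx, z, hz, rfl⟩ hη
  calc sDist B F ≤ dist y z' := csInf_le hbdd ⟨y, hy, z', hz', rfl⟩
    _ ≤ dist y x + dist x w + dist w z' := dist_triangle4 y x w z'
    _ ≤ dist y x + d + sDist A F + η := by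
        have := hd w hw
        simp only [sDist] at hlt ⊢
        linarith

lemma sqrt_mul_side_le_of_whitney {Ω : Set (Euc n)} (hfr : (frontier Ω).Nonempty)
    {c c' : Euc n} {l l' : ℝ} (hl : 0 ≤ l) (hl' : 0 ≤ l')
    (h₁ : diam (Wcube c' l') ≤ sDist (Wcube c' l') (frontier Ω))
    (h₂ : sDist (Wcube c l) (frontier Ω) ≤ 4 * diam (Wcube c l))
    {x y : Euc n} (hx : x ∈ Wcube c l) (hy : y ∈ Wcube c' l') :
    √n * l' ≤ dist y x + 5 * (√n * l) := by
  have := sDist_le_dist_add_sDist hfr hx hy fun w hw => dist_le_of_mem_Wcube hl hx hw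
  rw [diam_Wcube c hl] at h₂
  rw [diam_Wcube c' hl'] at h₁
  linarith

lemma isOpen_openCube (c : Euc n) (s : ℝ) : IsOpen (openCube c s) := by
  have : openCube c s = ⋂ j, (fun x : Euc n => x j) ⁻¹' ball (c j) s := by
    ext x; simp [openCube, Real.dist_eq]
  rw [this]
  exact isOpen_iInter_of_finite fun j =>
    isOpen_ball.preimage ((continuous_apply j).comp (PiLp.continuous_ofLp 2 _))

lemma openCube_subset_interior_Wcube (c : Euc n) (l : ℝ) :
    openCube c (l / 2) ⊆ interior (Wcube c l) :=
  interior_maximal (fun _ hx j => (hx j).le) (isOpen_openCube c (l / 2))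

lemma IsOpen.exists_mem_apply_ne {V : Set (Euc n)} (hV : IsOpen V) {y : Euc n} (hy : y ∈ V)
    (i : Fin n) (p : ℝ) : ∃ z ∈ V, z i ≠ p := by
  by_cases hyi : y i = p
  · obtain ⟨ε, hε, hball⟩ := Metric.isOpen_iff.1 hV y hy
    refine ⟨y + (ε / 2) • EuclideanSpace.single i 1, hball ?_, ?_⟩
    · rw [mem_ball, dist_eq_norm, add_sub_cancel_left, norm_smul, PiLp.norm_single]
      simp only [norm_one, mul_one, Real.norm_eq_abs, abs_of_pos (half_pos hε)]
      exact half_lt_self hε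
    · rw [add_smul_single_apply, if_pos rfl, hyi]
      linarith
  · exact ⟨y, hy, hyi⟩

lemma WcubeStar_eq_openCube (c : Euc n) (l : ℝ) : WcubeStar c l = openCube c (129 / 256 * l) := by
  have : (1 + (2 : ℝ) ^ (-7 : ℤ)) * l / 2 = 129 / 256 * l := by rw [zpow_neg, zpow_ofNat]; ring
  ext x
  simp only [WcubeStar, openCube, mem_ofPred_eq, this]

lemma openCube_subset_WcubeStar {c y : Euc n} {l r : ℝ} (hy : y ∈ Wcube c l)
    (hr : r ≤ l / 256) : openCube y r ⊆ WcubeStar c l := by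
  rw [WcubeStar_eq_openCube]
  intro x hx j
  calc |x j - c j| ≤ |x j - y j| + |y j - c j| := abs_sub_le ..
    _ < 129 / 256 * l := by linarith [hx j, hy j]

lemma exists_mem_openCube_near_of_mem_WcubeStar {c x : Euc n} {l : ℝ}
    (hx : x ∈ WcubeStar c l) : ∃ y ∈ openCube c (l / 2), ∀ j, |y j - x j| ≤ l / 256 := by
  rw [WcubeStar_eq_openCube] at hx
  refine ⟨c + (128 / 129 : ℝ) • (x - c), fun j => ?_, fun j => ?_⟩
  · have : (c + (128 / 129 : ℝ) • (x - c)) j - c j = 128 / 129 * (x j - c j) := by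
      simp only [PiLp.add_apply, PiLp.smul_apply, PiLp.sub_apply, smul_eq_mul, add_sub_cancel_left]
    rw [this, abs_mul, abs_of_pos (by norm_num)]
    linarith [hx j]
  · have : (c + (128 / 129 : ℝ) • (x - c)) j - x j = -(1 / 129 * (x j - c j)) := by
      simp only [PiLp.add_apply, PiLp.smul_apply, PiLp.sub_apply, smul_eq_mul]
      ring
    rw [this, abs_neg, abs_mul, abs_of_pos (by norm_num)]
    linarith [hx j]

section Face

variable {ca cb : Euc n} {la lb σ : ℝ} {i : Fin n}

lemma faceCenter_apply (c : Euc n) (l σ : ℝ) (i j : Fin n) :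
    faceCenter c l σ i j = c j + if j = i then σ * l / 2 else 0 :=
  add_smul_single_apply ..

lemma faceCenter_mem_Wface (hσ : |σ| = 1) (c : Euc n) {l : ℝ} (hl : 0 ≤ l) (i : Fin n) :
    faceCenter c l σ i ∈ Wface c l σ i := by
  refine ⟨by simp [faceCenter_apply], fun j => ?_⟩
  rw [faceCenter_apply, add_sub_cancel_left]
  split_ifs
  · rw [abs_div, abs_mul, hσ, abs_of_nonneg hl]; simp
  · rw [abs_zero]; positivity

variable (hσ : |σ| = 1) (hface : Wcube ca la ∩ Wcube cb lb = Wface ca la σ i)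
include hσ hface

lemma faceCenter_mem_inter (hla : 0 ≤ la) :
    faceCenter ca la σ i ∈ Wcube ca la ∩ Wcube cb lb :=
  hface ▸ faceCenter_mem_Wface hσ ca hla i

lemma apply_center_eq_of_inter_eq_Wface (hla : 0 < la) :
    cb i = ca i + σ * la / 2 + σ * lb / 2 := by
  set p := ca i + σ * la / 2 with hp
  have hσσ : σ * σ = 1 := by rw [← abs_mul_self, abs_mul, hσ, one_mul]
  have habs : ∀ z, |σ * z| = |z| := fun z => by rw [abs_mul, hσ, one_mul]
  have hF := faceCenter_mem_Wface hσ ca hla.le i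
  have hFB : Wface ca la σ i ⊆ Wcube cb lb := hface ▸ inter_subset_right
  set u := σ * (cb i - p)
  have hu : |u| ≤ lb / 2 := by
    have := hFB hF i
    rwa [hF.1, abs_sub_comm, ← habs] at this
  suffices u = lb / 2 by linear_combination σ * this - (cb i - p) * hσσ
  by_contra hne
  set δ := min la (lb / 2 - u)
  have hδ : 0 < δ := lt_min hla (sub_pos.2 (lt_of_le_of_ne (abs_le.1 hu).2 hne))
  let z := faceCenter ca la σ i + (-(σ * δ)) • EuclideanSpace.single i 1
  have hzj : ∀ j, j ≠ i → z j = faceCenter ca la σ i j := fun j hj => by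
    simp only [z, add_smul_single_apply, if_neg hj, add_zero]
  have hzi : z i = p - σ * δ := by
    simp only [z, add_smul_single_apply, if_pos, hF.1]
    ring
  have hz : z ∈ Wcube ca la ∩ Wcube cb lb := by
    refine ⟨fun j => ?_, fun j => ?_⟩ <;> rcases eq_or_ne j i with rfl | hj
    · rw [hzi, show p - σ * δ - ca j = σ * (la / 2 - δ) by ring, habs, abs_le]
      constructor <;> linarith [min_le_left la (lb / 2 - u)]
    · rw [hzj j hj]; exact hF.2 j
    · rw [hzi, show p - σ * δ - cb j = -(σ * (u + δ)) by linear_combination (cb j - p) * hσσ,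
        abs_neg, habs, abs_le]
      constructor <;> linarith [min_le_right la (lb / 2 - u), (abs_le.1 hu).1]
    · rw [hzj j hj]; exact hFB hF j
  have hzF : z ∈ Wface ca la σ i := hface ▸ hz
  have hσδ : σ * δ = 0 := by linarith [hzF.1, hzi, hp]
  have hσ0 : σ ≠ 0 := fun h => by simp [h] at hσ
  exact hδ.ne' ((mul_eq_zero.1 hσδ).resolve_left hσ0)

lemma abs_center_sub_center_le_of_inter_eq_Wface (hla : 0 ≤ la) {j : Fin n} (hj : j ≠ i) :
    |ca j - cb j| ≤ (lb - la) / 2 := by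
  have hF := faceCenter_mem_Wface hσ ca hla i
  have hFB : Wface ca la σ i ⊆ Wcube cb lb := hface ▸ inter_subset_right
  have key : ∀ e, |e| ≤ la / 2 → |ca j + e - cb j| ≤ lb / 2 := fun e he => by
    let z := faceCenter ca la σ i + e • EuclideanSpace.single j 1
    have hzk : ∀ k, z k = faceCenter ca la σ i k + if k = j then e else 0 :=
      fun k => add_smul_single_apply ..
    have hz : z ∈ Wface ca la σ i := by
      refine ⟨by rw [hzk, if_neg hj.symm, add_zero]; exact hF.1, fun k => ?_⟩
      rw [hzk]
      rcases eq_or_ne k j with rfl | hk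
      · rwa [if_pos rfl, faceCenter_apply, if_neg hj, add_zero, add_sub_cancel_left]
      · rw [if_neg hk, add_zero]; exact hF.2 k
    have := hFB hz j
    rwa [hzk, if_pos rfl, faceCenter_apply, if_neg hj, add_zero] at this
  have hplus := abs_le.1 (key (la / 2) (by rw [abs_of_nonneg (by positivity)]))
  have hminus := abs_le.1 (key (-(la / 2)) (by rw [abs_neg, abs_of_nonneg (by positivity)]))
  rw [abs_le]
  constructor <;> linarith

lemma mem_openCube_or_mem_openCube_of_inter_eq_Wface (hla : 0 < la) {ρ : ℝ}
    (hρa : ρ ≤ la / 2) (hρb : ρ ≤ lb) {z : Euc n} (hz : z ∈ openCube (faceCenter ca la σ i) ρ)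
    (hzi : z i ≠ ca i + σ * la / 2) : z ∈ openCube ca (la / 2) ∨ z ∈ openCube cb (lb / 2) := by
  have hσσ : σ * σ = 1 := by rw [← abs_mul_self, abs_mul, hσ, one_mul]
  have habs : ∀ w, |σ * w| = |w| := fun w => by rw [abs_mul, hσ, one_mul]
  have hcb := apply_center_eq_of_inter_eq_Wface hσ hface hla
  have hzj : ∀ j, j ≠ i → |z j - ca j| < ρ := fun j hj => by
    simpa [faceCenter_apply, hj] using hz j
  set s := σ * (z i - (ca i + σ * la / 2))
  have hs : |s| < ρ := by rw [habs]; simpa [faceCenter_apply, add_assoc] using hz i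
  have hs0 : s ≠ 0 := mul_ne_zero (by rintro rfl; simp at hσ) (sub_ne_zero.2 hzi)
  rcases hs0.lt_or_gt with hneg | hpos
  · refine Or.inl fun j => ?_
    rcases eq_or_ne j i with rfl | hj
    · rw [show z j - ca j = σ * (s + la / 2) by linear_combination (σ * la / 2 + ca j - z j) * hσσ,
        habs, abs_lt]
      constructor <;> linarith [abs_lt.1 hs]
    · exact (hzj j hj).trans_le hρa
  · refine Or.inr fun j => ?_
    rcases eq_or_ne j i with rfl | hj
    · rw [show z j - cb j = σ * (s - lb / 2) by
          linear_combination (σ * la / 2 + ca j - z j) * hσσ - hcb, habs, abs_lt]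
      constructor <;> linarith [abs_lt.1 hs]
    · calc |z j - cb j| ≤ |z j - ca j| + |ca j - cb j| := abs_sub_le ..
        _ < lb / 2 := by
          linarith [hzj j hj, abs_center_sub_center_le_of_inter_eq_Wface hσ hface hla.le hj]

end Face

lemma openCube_faceCenter_inter_WcubeStar_eq_empty (hn : 0 < n) {Ω : Set (Euc n)}
    (hfr : (frontier Ω).Nonempty) {ca cb ct : Euc n} {la lb lt σ r : ℝ} {i : Fin n}
    (hσ : |σ| = 1) (hface : Wcube ca la ∩ Wcube cb lb = Wface ca la σ i)
    (hla : 0 < la) (hlt : 0 < lt) (hlab : la ≤ 4 * lb) (hr : r ≤ la / 256)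
    (hA : sDist (Wcube ca la) (frontier Ω) ≤ 4 * diam (Wcube ca la))
    (hT : diam (Wcube ct lt) ≤ sDist (Wcube ct lt) (frontier Ω))
    (hTA : Disjoint (interior (Wcube ct lt)) (interior (Wcube ca la)))
    (hTB : Disjoint (interior (Wcube ct lt)) (interior (Wcube cb lb))) :
    openCube (faceCenter ca la σ i) r ∩ WcubeStar ct lt = ∅ := by
  set cF := faceCenter ca la σ i
  rw [eq_empty_iff_forall_notMem]
  rintro x ⟨hxF, hxT⟩
  obtain ⟨y, hyT, hyx⟩ := exists_mem_openCube_near_of_mem_WcubeStar hxT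
  have hyF : ∀ j, |y j - cF j| < lt / 256 + r := fun j =>
    calc |y j - cF j| ≤ |y j - x j| + |x j - cF j| := abs_sub_le ..
      _ < lt / 256 + r := add_lt_add_of_le_of_lt (hyx j) (hxF j)
  have hlt6 : lt ≤ 6 * la := by
    have hr0 : 0 ≤ r := (abs_nonneg _).trans (hxF ⟨0, hn⟩).le
    have hwhitney := sqrt_mul_side_le_of_whitney hfr hla.le hlt.le hT hA
      (faceCenter_mem_Wface hσ ca hla.le i).2 fun j => (hyT j).le
    have hdist := dist_le_sqrt_mul_of_abs_sub_le (by positivity) fun j => (hyF j).le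
    have : √n * lt ≤ √n * (lt / 256 + r + 5 * la) := by linarith
    linarith [le_of_mul_le_mul_left this (Real.sqrt_pos.2 (Nat.cast_pos.2 hn))]
  obtain ⟨z, ⟨hzT, hzF⟩, hzi⟩ :=
    ((isOpen_openCube ct (lt / 2)).inter (isOpen_openCube cF (la / 4))).exists_mem_apply_ne
      ⟨hyT, fun j => by linarith [hyF j]⟩ i (ca i + σ * la / 2)
  have hzT' := openCube_subset_interior_Wcube ct lt hzT
  rcases mem_openCube_or_mem_openCube_of_inter_eq_Wface hσ hface hla (by linarith) (by linarith)
    hzF hzi with hzA | hzB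
  · exact disjoint_left.1 hTA hzT' (openCube_subset_interior_Wcube ca la hzA)
  · exact disjoint_left.1 hTB hzT' (openCube_subset_interior_Wcube cb lb hzB)

lemma openCube_faceCenter_subset_and_inter_eq_empty {ι : Type*} (c : ι → Euc n) (l : ι → ℝ)
    (hn : 0 < n) {Ω : Set (Euc n)} (hfr : (frontier Ω).Nonempty) (hlpos : ∀ t, 0 < l t)
    (hdisj : ∀ s t : ι, s ≠ t →
      Disjoint (interior (Wcube (c s) (l s))) (interior (Wcube (c t) (l t))))
    (hdist₁ : ∀ t, diam (Wcube (c t) (l t)) ≤ sDist (Wcube (c t) (l t)) (frontier Ω))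
    (hdist₂ : ∀ t, sDist (Wcube (c t) (l t)) (frontier Ω) ≤ 4 * diam (Wcube (c t) (l t)))
    (hcomp : ∀ s t : ι, (Wcube (c s) (l s) ∩ Wcube (c t) (l t)).Nonempty →
      diam (Wcube (c s) (l s)) ≤ 4 * diam (Wcube (c t) (l t)))
    {a b : ι} {i : Fin n} {σ r : ℝ} (hσ : |σ| = 1)
    (hface : Wcube (c a) (l a) ∩ Wcube (c b) (l b) = Wface (c a) (l a) σ i)
    (hr : r ≤ max (l a) (l b) / 1024) :
    openCube (faceCenter (c a) (l a) σ i) r ⊆ WcubeStar (c a) (l a) ∩ WcubeStar (c b) (l b) ∧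
      ∀ t, t ≠ a → t ≠ b →
        openCube (faceCenter (c a) (l a) σ i) r ∩ WcubeStar (c t) (l t) = ∅ := by
  have hF := faceCenter_mem_inter hσ hface (hlpos a).le
  have hab := side_le_of_diam_Wcube_le hn (hlpos a).le (hlpos b).le (hcomp a b ⟨_, hF⟩)
  have hba := side_le_of_diam_Wcube_le hn (hlpos b).le (hlpos a).le (hcomp b a ⟨_, hF.2, hF.1⟩)
  have hmaxa : max (l a) (l b) ≤ 4 * l a := max_le (by linarith [hlpos a]) hba
  have hmaxb : max (l a) (l b) ≤ 4 * l b := max_le hab (by linarith [hlpos b])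
  have hra : r ≤ l a / 256 := by linarith
  have hrb : r ≤ l b / 256 := by linarith
  exact ⟨fun x hx => ⟨openCube_subset_WcubeStar hF.1 hra hx, openCube_subset_WcubeStar hF.2 hrb hx⟩,
    fun t hta htb => openCube_faceCenter_inter_WcubeStar_eq_empty hn hfr hσ hface (hlpos a)
      (hlpos t) hab hra (hdist₂ a) (hdist₁ t) (hdisj t a hta) (hdisj t b htb)⟩

end

theorem whitney_face_cube_general
    (n : ℕ) (Ω : Set (Euc n)) (hΩne : Ω.Nonempty)
    (hΩproper : Ω ≠ Set.univ)
    (ι : Type*) (c : ι → Euc n) (l : ι → ℝ)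
    -- W is a Whitney decomposition of Ω by dyadic cubes
    (hlpos : ∀ t, 0 < l t)
    (hdisj : ∀ s t : ι, s ≠ t →
      Disjoint (interior (Wcube (c s) (l s))) (interior (Wcube (c t) (l t))))
    (hdist₁ : ∀ t, Metric.diam (Wcube (c t) (l t)) ≤ sDist (Wcube (c t) (l t)) (frontier Ω))
    (hdist₂ : ∀ t, sDist (Wcube (c t) (l t)) (frontier Ω) ≤ 4 * Metric.diam (Wcube (c t) (l t)))
    (hcomp : ∀ s t : ι, (Wcube (c s) (l s) ∩ Wcube (c t) (l t)).Nonempty →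
      Metric.diam (Wcube (c s) (l s)) ≤ 4 * Metric.diam (Wcube (c t) (l t)))
    -- two cubes Q, Q̃ whose intersection is an (n-1)-dimensional face of one of
    -- them, with center cF
    (q qt : ι) (cF : Euc n)
    (hface : ∃ (i : Fin n) (σ : ℝ), (σ = 1 ∨ σ = -1) ∧
      ((Wcube (c q) (l q) ∩ Wcube (c qt) (l qt) =
          {x | x i = c q i + σ * l q / 2 ∧ ∀ j, |x j - c q j| ≤ l q / 2} ∧
        cF = c q + (σ * l q / 2) • EuclideanSpace.single i 1) ∨
       (Wcube (c q) (l q) ∩ Wcube (c qt) (l qt) =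
          {x | x i = c qt i + σ * l qt / 2 ∧ ∀ j, |x j - c qt j| ≤ l qt / 2} ∧
        cF = c qt + (σ * l qt / 2) • EuclideanSpace.single i 1))) :
    -- B: the open cube centered at cF with sides of length 2⁻⁹ · l(Q)
    ({x : Euc n | ∀ i, |x i - cF i| < (2:ℝ)^(-9 : ℤ) * l q / 2} ⊆
        WcubeStar (c q) (l q) ∩ WcubeStar (c qt) (l qt)) ∧
    ∀ t : ι, t ≠ q → t ≠ qt →
      {x : Euc n | ∀ i, |x i - cF i| < (2:ℝ)^(-9 : ℤ) * l q / 2} ∩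
        WcubeStar (c t) (l t) = ∅ := by
  have hfr : (frontier Ω).Nonempty := nonempty_frontier_iff.2 ⟨hΩne, hΩproper⟩
  have hn : 0 < n := Nat.pos_of_ne_zero fun h => by
    subst h
    exact hΩproper (Subsingleton.eq_univ_of_nonempty hΩne)
  obtain ⟨i, σ, hσ, hcase⟩ := hface
  have hσ' : |σ| = 1 := by rcases hσ with rfl | rfl <;> norm_num
  have hr : (2 : ℝ) ^ (-9 : ℤ) * l q / 2 = l q / 1024 := by
    rw [zpow_neg, zpow_ofNat]; ring
  rcases hcase with ⟨hF, rfl⟩ | ⟨hF, rfl⟩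
  · exact openCube_faceCenter_subset_and_inter_eq_empty c l hn hfr hlpos hdisj hdist₁ hdist₂
      hcomp hσ' hF (hr.trans_le (by gcongr; exact le_max_left _ _))
  · obtain ⟨hsub, hempty⟩ := openCube_faceCenter_subset_and_inter_eq_empty c l hn hfr hlpos
      hdisj hdist₁ hdist₂ hcomp hσ' (inter_comm (Wcube (c qt) _) _ ▸ hF)
      (hr.trans_le (by gcongr; exact le_max_right _ _))
    exact ⟨fun x hx => ⟨(hsub hx).2, (hsub hx).1⟩, fun t htq htqt => hempty t htqt htq⟩

theorem whitney_face_cube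
    (n : ℕ) (Ω : Set (Euc n)) (hΩopen : IsOpen Ω) (hΩne : Ω.Nonempty)
    (hΩproper : Ω ≠ Set.univ)
    (ι : Type*) [Countable ι] (c : ι → Euc n) (l : ι → ℝ)
    -- W is a Whitney decomposition of Ω by dyadic cubes
    (hlpos : ∀ t, 0 < l t)
    (hdyadic : ∀ t, ∃ k : ℤ, l t = 2 ^ k)
    (hcover : Ω = ⋃ t, Wcube (c t) (l t))
    (hdisj : ∀ s t : ι, s ≠ t →
      Disjoint (interior (Wcube (c s) (l s))) (interior (Wcube (c t) (l t))))
    (hdist₁ : ∀ t, Metric.diam (Wcube (c t) (l t)) ≤ sDist (Wcube (c t) (l t)) (frontier Ω))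
    (hdist₂ : ∀ t, sDist (Wcube (c t) (l t)) (frontier Ω) ≤ 4 * Metric.diam (Wcube (c t) (l t)))
    (hcomp : ∀ s t : ι, (Wcube (c s) (l s) ∩ Wcube (c t) (l t)).Nonempty →
      Metric.diam (Wcube (c s) (l s)) ≤ 4 * Metric.diam (Wcube (c t) (l t)))
    -- two cubes Q, Q̃ whose intersection is an (n-1)-dimensional face of one of
    -- them, with center cF
    (q qt : ι) (hq : q ≠ qt) (cF : Euc n)
    (hface : ∃ (i : Fin n) (σ : ℝ), (σ = 1 ∨ σ = -1) ∧
      ((Wcube (c q) (l q) ∩ Wcube (c qt) (l qt) =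
          {x | x i = c q i + σ * l q / 2 ∧ ∀ j, |x j - c q j| ≤ l q / 2} ∧
        cF = c q + (σ * l q / 2) • EuclideanSpace.single i 1) ∨
       (Wcube (c q) (l q) ∩ Wcube (c qt) (l qt) =
          {x | x i = c qt i + σ * l qt / 2 ∧ ∀ j, |x j - c qt j| ≤ l qt / 2} ∧
        cF = c qt + (σ * l qt / 2) • EuclideanSpace.single i 1))) :
    -- B: the open cube centered at cF with sides of length 2⁻⁹ · l(Q)
    ({x : Euc n | ∀ i, |x i - cF i| < (2:ℝ)^(-9 : ℤ) * l q / 2} ⊆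
        WcubeStar (c q) (l q) ∩ WcubeStar (c qt) (l qt)) ∧
    ∀ t : ι, t ≠ q → t ≠ qt →
      {x : Euc n | ∀ i, |x i - cF i| < (2:ℝ)^(-9 : ℤ) * l q / 2} ∩
        WcubeStar (c t) (l t) = ∅ :=
  whitney_face_cube_general n Ω hΩne hΩproper ι c l hlpos hdisj hdist₁ hdist₂ hcomp q qt cF hface
end
end
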